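/- Let N ≥ 8 be an integer divisible by 4 and let b_1 be a nonzero real number. Define b ∈ ℝ^{N/2} by b_r = b_1 sin²(π/N)/sin²(rπ/N) for 1 ≤ r ≤ N/2 − 1 and b_{N/2} = (b_1/2) sin²(π/N). Then ψ^{(i,j,k,l)}(b) = 0 for all integers i, j, k, l with −N/2 + 1 ≤ i, j, k, l ≤ N/2 − 1 and i + j + k + l = N or i + j + k + l = −N. (Consequently the quartic asymmetric part Φ_a of the long-range lattice Hamiltonian with coupling coefficients b_r vanishes identically, i.e., the lattice is a symmetric lattice.) -/

import Mathlib

/-- `c_α = cos(απ/N)` -/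
noncomputable def cc (N : ℕ) (a : ℤ) : ℝ := Real.cos (a * Real.pi / N)

/-- `s_α = sin(απ/N)` -/
noncomputable def ss (N : ℕ) (a : ℤ) : ℝ := Real.sin (a * Real.pi / N)

/-- `f_q^{(i,j,k,l)}` -/
noncomputable def ff (N : ℕ) (i j k l : ℤ) (q : ℕ) : ℝ :=
  if Odd q then cc N (i * q) * cc N (j * q) * cc N (k * q) * cc N (l * q)
  else ss N (i * q) * ss N (j * q) * ss N (k * q) * ss N (l * q)

/-- `ψ^{(i,j,k,l)}(b)` -/
noncomputable def psi (N : ℕ) (b : Fin (N / 2) → ℝ) (i j k l : ℤ) : ℝ :=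
  -∑ q : Fin (N / 2), (-1 : ℝ) ^ ((q : ℕ) + 1) * b q * ff N i j k l ((q : ℕ) + 1)

/-- The explicit solution: `b_r = b₁ sin²(π/N)/sin²(rπ/N)` for `1 ≤ r ≤ N/2 − 1`
and `b_{N/2} = (b₁/2) sin²(π/N)`; the vector is 0-indexed (`b ⟨0,_⟩` is `b_1`). -/
noncomputable def bsol (N : ℕ) (b1 : ℝ) : Fin (N / 2) → ℝ := fun r =>
  if (r : ℕ) + 1 = N / 2 then b1 / 2 * Real.sin (Real.pi / N) ^ 2
  else b1 * Real.sin (Real.pi / N) ^ 2 / Real.sin (((r : ℕ) + 1) * Real.pi / N) ^ 2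

/-!
Write `n = N / 2` and `F q = (-1)^q f_q / sin²(qπ/N)`. For the explicit `b`, `ψ(b)` is a multiple
of `∑_{q<n} F q + F n / 2`, which is half of `∑_{q=1}^{N-1} F q` because `F (N - q) = F q`.
Since `ψ` is unchanged when all four indices are negated, we may assume `i + j + k + l = N`.
Then the angles `(n - α) q π / N` (`α = i, j, k, l`) add up to `qπ`, and a four-angle identity
writes `4 (-1)^q f_q` as a signed sum of seven terms `sin²(t q π / N)` with
`t ∈ {n-i, n-j, n-k, n-l, k+l, j+l, j+k} ⊆ [0, N]`. Fejér's identity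
`∑_{q=1}^{N-1} sin²(tqπ/N) / sin²(qπ/N) = t (N - t)` turns the full sum into
`(∑ (n² - α²) - (k+l)(i+j) - (j+l)(i+k) - (j+k)(i+l)) / 4 = (N² - (i+j+k+l)²) / 4 = 0`.
-/

open Real Finset

namespace Real

lemma sin_sq_sub_sin_sq (x y : ℝ) : sin x ^ 2 - sin y ^ 2 = sin (x + y) * sin (x - y) := by
  rw [sin_add, sin_sub]
  linear_combination sin y ^ 2 * sin_sq_add_cos_sq x - sin x ^ 2 * sin_sq_add_cos_sq y

lemma sum_sin_sq_sub_sum_sin_sq_add_of_sin_add_eq_zero {a b c d : ℝ}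
    (h : sin (a + b + c + d) = 0) :
    sin a ^ 2 + sin b ^ 2 + sin c ^ 2 + sin d ^ 2
        - sin (a + b) ^ 2 - sin (a + c) ^ 2 - sin (a + d) ^ 2
      = 4 * cos (a + b + c + d) * (sin a * sin b * sin c * sin d) := by
  have hpair : ∀ x, sin x ^ 2 - sin (a + x) ^ 2 = -(sin a * sin (a + 2 * x)) := fun x => by
    rw [sin_sq_sub_sin_sq, show x - (a + x) = -a by ring, sin_neg]; ring_nf
  obtain ⟨s, rfl⟩ : ∃ s, a = s - (b + c + d) := ⟨a + b + c + d, by ring⟩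
  rw [show s - (b + c + d) + b + c + d = s by ring] at h ⊢
  have hsum : sin (s - (b + c + d)) - sin (s - (b + c + d) + 2 * b)
      - sin (s - (b + c + d) + 2 * c) - sin (s - (b + c + d) + 2 * d)
      = 4 * cos s * (sin b * sin c * sin d) := by
    rw [show s - (b + c + d) + 2 * b = s + (b - c - d) by ring,
      show s - (b + c + d) + 2 * c = s + (c - b - d) by ring,
      show s - (b + c + d) + 2 * d = s + (d - b - c) by ring]
    simp only [sin_add, sin_sub, cos_add, cos_sub, h]
    ring
  linear_combination hpair b + hpair c + hpair d + sin (s - (b + c + d)) * hsum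

lemma sum_range_cos_two_mul_nat_mul_pi_div_eq_zero {N u : ℕ} (hu : 0 < u) (huN : u < N) :
    ∑ q ∈ range N, cos (2 * u * q * π / N) = 0 := by
  have hu' : (0 : ℝ) < u := by exact_mod_cast hu
  have huN' : (u : ℝ) < N := by exact_mod_cast huN
  set θ : ℝ := 2 * π * u / N with hθdef
  have hθ : 0 < θ ∧ θ < 2 * π := by
    constructor
    · exact div_pos (mul_pos (by positivity) hu') (hu'.trans huN')
    · rw [div_lt_iff₀ (hu'.trans huN')]; nlinarith [pi_pos]
  set z : ℂ := Complex.exp (θ * Complex.I)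
  have hre (q : ℕ) : cos (2 * u * q * π / N) = (z ^ q).re := by
    rw [← Complex.exp_nat_mul,
      show (q : ℂ) * (θ * Complex.I) = ((q * θ : ℝ) : ℂ) * Complex.I by push_cast; ring,
      Complex.exp_ofReal_mul_I_re, hθdef]
    ring_nf
  have hz1 : z ≠ 1 := fun h => by
    have h' := congrArg Complex.re h
    rw [Complex.exp_ofReal_mul_I_re, Complex.one_re,
      cos_eq_one_iff_of_lt_of_lt (by linarith) hθ.2] at h'
    exact hθ.1.ne' h'
  have hzN : z ^ N = 1 := by
    rw [← Complex.exp_nat_mul, ← Complex.exp_int_mul_two_pi_mul_I u]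
    congr 1
    have : (N : ℂ) ≠ 0 := by exact_mod_cast (hu.trans huN).ne'
    rw [hθdef]
    push_cast
    field_simp
  simp only [hre, ← Complex.re_sum, geom_sum_eq hz1, hzN, sub_self, zero_div, Complex.zero_re]

lemma sin_sq_add_sin_sq_sub_two_mul_sin_sq (a x : ℝ) :
    sin (a + x) ^ 2 + sin (a - x) ^ 2 - 2 * sin a ^ 2 = 2 * cos (2 * a) * sin x ^ 2 := by
  rw [sin_add, sin_sub, cos_two_mul]
  linear_combination 2 * sin a ^ 2 * sin_sq_add_cos_sq x - 2 * sin x ^ 2 * sin_sq_add_cos_sq a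

lemma sin_nat_mul_pi_div_pos {N q : ℕ} (hq : 0 < q) (hqN : q < N) : 0 < sin (q * π / N) := by
  have : (q : ℝ) < N := by exact_mod_cast hqN
  have : (0 : ℝ) < q := by exact_mod_cast hq
  apply sin_pos_of_pos_of_lt_pi (div_pos (mul_pos this pi_pos) (by linarith))
  rw [div_lt_iff₀ (by linarith)]
  nlinarith [pi_pos]

theorem sum_Ico_sin_sq_div_sin_sq {N t : ℕ} (ht : t ≤ N) :
    ∑ q ∈ Ico 1 N, sin (t * q * π / N) ^ 2 / sin (q * π / N) ^ 2 = t * (N - t) := by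
  induction t using Nat.strong_induction_on with
  | _ t ih =>
  match t with
  | 0 => simp
  | 1 =>
    have hone : ∀ q ∈ Ico 1 N, sin ((1 : ℕ) * q * π / N) ^ 2 / sin (q * π / N) ^ 2 = 1 :=
      fun q hq => by
        rw [Nat.cast_one, one_mul,
          div_self (pow_ne_zero 2 (sin_nat_mul_pi_div_pos (mem_Ico.1 hq).1 (mem_Ico.1 hq).2).ne')]
    rw [sum_congr rfl hone, sum_const, Nat.card_Ico, nsmul_eq_mul, mul_one, Nat.cast_sub ht]
    push_cast
    ring
  | t + 2 =>
    have hcos : ∑ q ∈ Ico 1 N, cos (2 * (t + 1 : ℕ) * q * π / N) = -1 := by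
      have h := sum_range_cos_two_mul_nat_mul_pi_div_eq_zero (N := N) (u := t + 1)
        (by omega) (by omega)
      rw [range_eq_Ico, sum_eq_sum_Ico_succ_bot (by omega)] at h
      simp only [CharP.cast_eq_zero, mul_zero, zero_mul, zero_div, cos_zero] at h
      linarith
    have hstep : ∀ q ∈ Ico 1 N, sin ((t + 2 : ℕ) * q * π / N) ^ 2 / sin (q * π / N) ^ 2
        = 2 * (sin ((t + 1 : ℕ) * q * π / N) ^ 2 / sin (q * π / N) ^ 2)
          - sin (t * q * π / N) ^ 2 / sin (q * π / N) ^ 2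
          + 2 * cos (2 * (t + 1 : ℕ) * q * π / N) := by
      intro q hq
      have hs := (sin_nat_mul_pi_div_pos (mem_Ico.1 hq).1 (mem_Ico.1 hq).2).ne'
      have h := sin_sq_add_sin_sq_sub_two_mul_sin_sq ((t + 1 : ℕ) * q * π / N) (q * π / N)
      rw [show ((t + 2 : ℕ) : ℝ) * q * π / N = (t + 1 : ℕ) * q * π / N + q * π / N by
          push_cast; ring,
        show (t : ℝ) * q * π / N = (t + 1 : ℕ) * q * π / N - q * π / N by push_cast; ring,
        show 2 * ((t + 1 : ℕ) : ℝ) * q * π / N = 2 * ((t + 1 : ℕ) * q * π / N) by ring]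
      generalize ((t + 1 : ℕ) : ℝ) * q * π / N = a at h ⊢
      generalize (q : ℝ) * π / N = x at h hs ⊢
      generalize cos (2 * a) = c at h ⊢
      field_simp
      linear_combination h
    rw [sum_congr rfl hstep, sum_add_distrib, sum_sub_distrib, ← mul_sum, ← mul_sum, hcos,
      ih (t + 1) (by omega) (by omega), ih t (by omega) (by omega)]
    push_cast
    ring

theorem sum_Ico_sin_sq_int_mul_div_sin_sq {N : ℕ} {t : ℤ} (ht₀ : 0 ≤ t) (ht : t ≤ N) :
    ∑ q ∈ Ico 1 N, sin (t * q * π / N) ^ 2 / sin (q * π / N) ^ 2 = t * (N - t) := by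
  lift t to ℕ using ht₀
  exact_mod_cast sum_Ico_sin_sq_div_sin_sq (by omega)

end Real

theorem Finset.sum_Ico_one_eq_two_nsmul_add_of_reflect {M : Type*} [AddCommMonoid M] {f : ℕ → M}
    {N n : ℕ} (hN : N = 2 * n) (hn : n ≠ 0) (hf : ∀ q ∈ Ico 1 n, f (N - q) = f q) :
    ∑ q ∈ Ico 1 N, f q = 2 • ∑ q ∈ Ico 1 n, f q + f n := by
  have hupper : ∑ q ∈ Ico (n + 1) N, f q = ∑ q ∈ Ico 1 n, f q := by
    rw [← sum_congr rfl hf, sum_Ico_reflect f 1 (by omega)]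
    congr 2; omega
  rw [← sum_Ico_consecutive f (show 1 ≤ n by omega) (show n ≤ N by omega),
    sum_eq_sum_Ico_succ_bot (show n < N by omega), hupper, two_nsmul]
  abel

lemma ff_eq_prod_sin (N : ℕ) (i j k l : ℤ) (q : ℕ) :
    ff N i j k l q = sin (q * π / 2 - i * q * π / N) * sin (q * π / 2 - j * q * π / N)
      * sin (q * π / 2 - k * q * π / N) * sin (q * π / 2 - l * q * π / N) := by
  have hsq (m : ℕ) : ((-1 : ℝ) ^ m) ^ 4 = 1 := by
    rcases neg_one_pow_eq_or ℝ m with h | h <;> rw [h] <;> norm_num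
  rcases Nat.even_or_odd' q with ⟨m, rfl | rfl⟩
  · have hsin (x : ℝ) : sin (((2 * m : ℕ) : ℝ) * π / 2 - x) = -((-1) ^ m * sin x) := by
      rw [← sin_nat_mul_pi_sub]; push_cast; ring_nf
    rw [ff, if_neg (Nat.not_odd_iff_even.2 (even_two_mul m)), hsin, hsin, hsin, hsin]
    simp only [ss]; push_cast
    linear_combination (-(sin (i * (2 * m) * π / N) * sin (j * (2 * m) * π / N)
      * sin (k * (2 * m) * π / N) * sin (l * (2 * m) * π / N))) * hsq m
  · have hcos (x : ℝ) : sin (((2 * m + 1 : ℕ) : ℝ) * π / 2 - x) = (-1) ^ m * cos x := by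
      rw [← sin_pi_div_two_sub, ← sin_add_nat_mul_pi]; push_cast; ring_nf
    rw [ff, if_pos (odd_two_mul_add_one m), hcos, hcos, hcos, hcos]
    simp only [cc]; push_cast
    linear_combination (-(cos (i * (2 * m + 1) * π / N) * cos (j * (2 * m + 1) * π / N)
      * cos (k * (2 * m + 1) * π / N) * cos (l * (2 * m + 1) * π / N))) * hsq m

lemma ff_neg (N : ℕ) (i j k l : ℤ) (q : ℕ) : ff N (-i) (-j) (-k) (-l) q = ff N i j k l q := by
  simp only [ff, cc, ss, neg_mul, Int.cast_neg, neg_div, cos_neg, sin_neg, mul_neg, neg_neg]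

lemma ff_sub {N : ℕ} (hN : Even N) {i j k l : ℤ} (hsum : Even (i + j + k + l)) {q : ℕ}
    (hq : q ≤ N) : ff N i j k l (N - q) = ff N i j k l q := by
  rcases Nat.eq_zero_or_pos N with rfl | hN0
  · rw [Nat.le_zero.1 hq]
  have hsign : (-1 : ℝ) ^ i * (-1) ^ j * (-1) ^ k * (-1) ^ l = 1 := by
    rw [← zpow_add₀, ← zpow_add₀, ← zpow_add₀, hsum.neg_one_zpow] <;> norm_num
  have harg (a : ℤ) :
      ((a * (N - q : ℕ) : ℤ) : ℝ) * π / N = a * π - ((a * q : ℤ) : ℝ) * π / N := by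
    push_cast [Nat.cast_sub hq]
    field_simp
  have hpar : Odd (N - q) ↔ Odd q := by
    rw [Nat.odd_sub hq, ← Nat.not_even_iff_odd]
    simp [hN]
  by_cases hodd : Odd q
  · rw [ff, ff, if_pos hodd, if_pos (hpar.2 hodd)]
    simp only [cc, harg, cos_int_mul_pi_sub]
    linear_combination (cos ((i * q : ℤ) * π / N) * cos ((j * q : ℤ) * π / N)
      * cos ((k * q : ℤ) * π / N) * cos ((l * q : ℤ) * π / N)) * hsign
  · rw [ff, ff, if_neg hodd, if_neg (hpar.not.2 hodd)]
    simp only [ss, harg, sin_int_mul_pi_sub]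
    linear_combination (sin ((i * q : ℤ) * π / N) * sin ((j * q : ℤ) * π / N)
      * sin ((k * q : ℤ) * π / N) * sin ((l * q : ℤ) * π / N)) * hsign

noncomputable def ffDivSinSq (N : ℕ) (i j k l : ℤ) (q : ℕ) : ℝ :=
  (-1) ^ q * ff N i j k l q / sin (q * π / N) ^ 2

lemma sum_sin_sq_sub_sum_sin_sq_eq_four_mul_ff {N n : ℕ} (hN : N = 2 * n) (hn : n ≠ 0)
    {i j k l : ℤ} (hsum : i + j + k + l = N) (q : ℕ) :
    sin ((n - i) * q * π / N) ^ 2 + sin ((n - j) * q * π / N) ^ 2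
        + sin ((n - k) * q * π / N) ^ 2 + sin ((n - l) * q * π / N) ^ 2
        - sin ((k + l) * q * π / N) ^ 2 - sin ((j + l) * q * π / N) ^ 2
        - sin ((j + k) * q * π / N) ^ 2
      = 4 * ((-1) ^ q * ff N i j k l q) := by
  have hN0 : (N : ℝ) ≠ 0 := Nat.cast_ne_zero.2 (by omega)
  have hNn : (N : ℝ) = 2 * n := by exact_mod_cast hN
  have hsumR : (i : ℝ) + j + k + l = N := by exact_mod_cast hsum
  have harg (a : ℤ) : (q : ℝ) * π / 2 - a * q * π / N = (n - a) * q * π / N := by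
    rw [hNn]; field_simp
  have hpair {a b c d : ℤ} (h : (a : ℝ) + b + c + d = N) :
      (n - a) * q * π / N + (n - b) * q * π / N = (c + d) * q * π / N := by
    rw [← add_div, ← add_mul, ← add_mul]
    congr 3
    linarith
  have htotal : (n - i) * q * π / N + (n - j) * q * π / N + (n - k) * q * π / N
      + (n - l) * q * π / N = q * π :=
    calc _ = (4 * n - (i + j + k + l)) * q * π / N := by ring
      _ = q * π := by rw [hsumR, hNn]; field_simp; ring
  have key := sum_sin_sq_sub_sum_sin_sq_add_of_sin_add_eq_zero (htotal ▸ sin_nat_mul_pi q)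
  rw [htotal, cos_nat_mul_pi, hpair hsumR, hpair (by linarith : (i : ℝ) + k + j + l = N),
    hpair (by linarith : (i : ℝ) + l + j + k = N)] at key
  rw [ff_eq_prod_sin, harg, harg, harg, harg]
  linear_combination key

theorem sum_Ico_ffDivSinSq_eq_zero {N n : ℕ} (hN : N = 2 * n) {i j k l : ℤ}
    (hi : |i| ≤ n) (hj : |j| ≤ n) (hk : |k| ≤ n) (hl : |l| ≤ n) (hsum : i + j + k + l = N) :
    ∑ q ∈ Ico 1 N, ffDivSinSq N i j k l q = 0 := by
  set T : ℤ → ℕ → ℝ := fun t q => sin (t * q * π / N) ^ 2 / sin (q * π / N) ^ 2 with hT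
  have hterm : ∀ q ∈ Ico 1 N, ffDivSinSq N i j k l q = 1 / 4 * (T (n - i) q + T (n - j) q
      + T (n - k) q + T (n - l) q - T (k + l) q - T (j + l) q - T (j + k) q) := fun q hq => by
    have h := sum_sin_sq_sub_sum_sin_sq_eq_four_mul_ff hN (by have := mem_Ico.1 hq; omega) hsum q
    rw [ffDivSinSq, eq_div_of_mul_eq four_ne_zero ((mul_comm _ _).trans h.symm)]
    simp only [hT]
    push_cast
    ring
  have hfejer {t : ℤ} (h₀ : 0 ≤ t) (h : t ≤ N) : ∑ q ∈ Ico 1 N, T t q = t * (N - t) :=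
    sum_Ico_sin_sq_int_mul_div_sin_sq h₀ h
  rw [abs_le] at hi hj hk hl
  rw [sum_congr rfl hterm, ← mul_sum]
  simp only [sum_add_distrib, sum_sub_distrib]
  rw [hfejer (by omega) (by omega), hfejer (by omega) (by omega), hfejer (by omega) (by omega),
    hfejer (by omega) (by omega), hfejer (by omega) (by omega), hfejer (by omega) (by omega),
    hfejer (by omega) (by omega)]
  have hsumR : (i : ℝ) + j + k + l = N := by exact_mod_cast hsum
  have hNn : (N : ℝ) = 2 * n := by exact_mod_cast hN
  push_cast
  linear_combination (-(1 / 4) * (2 * n + i - j - k - l)) * hsumR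
    + ((n - i - j - k - l) / 2) * hNn

lemma ffDivSinSq_sub {N : ℕ} (hN : Even N) {i j k l : ℤ} (hsum : Even (i + j + k + l)) {q : ℕ}
    (hq : q ≤ N) : ffDivSinSq N i j k l (N - q) = ffDivSinSq N i j k l q := by
  rcases Nat.eq_zero_or_pos N with rfl | hN0
  · rw [Nat.le_zero.1 hq]
  have hsign : (-1 : ℝ) ^ (N - q) = (-1) ^ q := by
    rw [neg_one_pow_eq_pow_mod_two, neg_one_pow_eq_pow_mod_two (n := q)]
    congr 1
    have := Nat.even_iff.1 hN
    omega
  have hsin : sin ((N - q : ℕ) * π / N) = sin (q * π / N) := by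
    rw [Nat.cast_sub hq, ← sin_pi_sub]
    congr 1
    field_simp
    ring
  rw [ffDivSinSq, ffDivSinSq, ff_sub hN hsum hq, hsign, hsin]

lemma psi_neg (N : ℕ) (b : Fin (N / 2) → ℝ) (i j k l : ℤ) :
    psi N b (-i) (-j) (-k) (-l) = psi N b i j k l := by
  simp only [psi, ff_neg]

lemma psi_bsol {N n : ℕ} (hN : N = 2 * n) (hn : n ≠ 0) (b1 : ℝ) (i j k l : ℤ) :
    psi N (bsol N b1) i j k l = -(b1 * sin (π / N) ^ 2)
      * (∑ q ∈ Ico 1 n, ffDivSinSq N i j k l q + ffDivSinSq N i j k l n / 2) := by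
  have hn2 : N / 2 = n := by omega
  obtain ⟨m, rfl⟩ : ∃ m, n = m + 1 := ⟨n - 1, by omega⟩
  have hsin : sin ((m + 1 : ℕ) * π / N) = 1 := by
    rw [← sin_pi_div_two]
    congr 1
    rw [hN]
    field_simp
    push_cast
    ring
  simp only [psi, bsol]
  rw [Fin.sum_univ_eq_sum_range (fun q => (-1 : ℝ) ^ (q + 1) * (if q + 1 = N / 2
    then b1 / 2 * sin (π / N) ^ 2 else b1 * sin (π / N) ^ 2 / sin ((q + 1) * π / N) ^ 2)
    * ff N i j k l (q + 1)), hn2, sum_range_succ, if_pos rfl, sum_Ico_eq_sum_range,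
    add_tsub_cancel_right, ffDivSinSq, hsin]
  have hbody : ∀ q ∈ range m, (-1 : ℝ) ^ (q + 1) * (if q + 1 = m + 1
      then b1 / 2 * sin (π / N) ^ 2 else b1 * sin (π / N) ^ 2 / sin ((q + 1) * π / N) ^ 2)
      * ff N i j k l (q + 1) = b1 * sin (π / N) ^ 2 * ffDivSinSq N i j k l (1 + q) :=
    fun q hq => by
      rw [if_neg (by have := mem_range.1 hq; omega), ffDivSinSq, add_comm 1 q]
      push_cast
      ring
  rw [sum_congr rfl hbody, ← mul_sum]
  ring

theorem psi_bsol_eq_zero {N n : ℕ} (hN : N = 2 * n) (hn : n ≠ 0) (b1 : ℝ) {i j k l : ℤ}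
    (hi : |i| ≤ n) (hj : |j| ≤ n) (hk : |k| ≤ n) (hl : |l| ≤ n) (hsum : i + j + k + l = N) :
    psi N (bsol N b1) i j k l = 0 := by
  have hNeven : Even N := ⟨n, by omega⟩
  have hfull := sum_Ico_ffDivSinSq_eq_zero hN hi hj hk hl hsum
  rw [sum_Ico_one_eq_two_nsmul_add_of_reflect hN hn fun q hq =>
      ffDivSinSq_sub hNeven (by rw [hsum]; exact_mod_cast hNeven)
        (by have := mem_Ico.1 hq; omega),
    two_nsmul] at hfull
  rw [psi_bsol hN hn]
  linear_combination (-(b1 * sin (π / N) ^ 2) / 2) * hfull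

theorem psi_explicit_solution_asymmetric_vanishes (N : ℕ) (hN4 : 4 ∣ N)
    (b1 : ℝ) (i j k l : ℤ)
    (hi : -((N : ℤ) / 2) + 1 ≤ i ∧ i ≤ (N : ℤ) / 2 - 1)
    (hj : -((N : ℤ) / 2) + 1 ≤ j ∧ j ≤ (N : ℤ) / 2 - 1)
    (hk : -((N : ℤ) / 2) + 1 ≤ k ∧ k ≤ (N : ℤ) / 2 - 1)
    (hl : -((N : ℤ) / 2) + 1 ≤ l ∧ l ≤ (N : ℤ) / 2 - 1)
    (hsum : i + j + k + l = (N : ℤ) ∨ i + j + k + l = -(N : ℤ)) :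
    psi N (bsol N b1) i j k l = 0 := by
  obtain ⟨n, hN⟩ : ∃ n, N = 2 * n := ⟨N / 2, by omega⟩
  have hn : n ≠ 0 := by omega
  have hbound {a : ℤ} (ha : -((N : ℤ) / 2) + 1 ≤ a ∧ a ≤ (N : ℤ) / 2 - 1) : |a| ≤ n :=
    abs_le.2 ⟨by omega, by omega⟩
  rcases hsum with hsum | hsum
  · exact psi_bsol_eq_zero hN hn b1 (hbound hi) (hbound hj) (hbound hk) (hbound hl) hsum
  · rw [← psi_neg]
    exact psi_bsol_eq_zero hN hn b1 (by simpa using hbound hi) (by simpa using hbound hj)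
      (by simpa using hbound hk) (by simpa using hbound hl) (by omega)
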